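/- Let f : (ℂ*)ⁿ → ℂ* be given by f(z) = z₁^{α₁} ⋯ z_n^{α_n} · g(z) where g : ℂⁿ → ℂ* is continuous (the restriction of a nowhere-vanishing continuous function on ℂⁿ) and α ∈ ℤⁿ. Then the exponent vector α is uniquely determined by f: if z^α g = z^β h with g, h nowhere-vanishing continuous functions on ℂⁿ, then α = β. -/

import Mathlib

/-!
Restrict the identity to the coordinate line `z = (1, …, 1, w, 1, …, 1)`, with `w` in the `i`-th
slot: it becomes `w ^ αᵢ * g = w ^ βᵢ * h` for `w ≠ 0`. If `αᵢ > βᵢ`, cancelling `w ^ βᵢ` and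
letting `w → 0` forces `h` to vanish at the point `(1, …, 1, 0, 1, …, 1)`, so by symmetry
`αᵢ = βᵢ`.
-/

open Filter Topology

section OneVariable

variable {𝕜 : Type*} [NontriviallyNormedField 𝕜] {a b : 𝕜 → 𝕜}

theorem eq_zero_of_forall_pow_mul_eq {k : ℕ} (hk : k ≠ 0) (ha : ContinuousAt a 0)
    (hb : ContinuousAt b 0) (hab : ∀ w ≠ 0, w ^ k * a w = b w) : b 0 = 0 := by
  have hlim_lhs : Tendsto (fun w => w ^ k * a w) (𝓝[≠] 0) (𝓝 0) := by
    have : Tendsto (fun w => w ^ k * a w) (𝓝 0) (𝓝 (0 ^ k * a 0)) :=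
      ((continuousAt_id.pow k).mul ha).tendsto
    rw [zero_pow hk, zero_mul] at this
    exact this.mono_left nhdsWithin_le_nhds
  have hlim_rhs : Tendsto b (𝓝[≠] 0) (𝓝 (b 0)) := hb.tendsto.mono_left nhdsWithin_le_nhds
  exact tendsto_nhds_unique hlim_rhs
    (hlim_lhs.congr' (eventually_mem_nhdsWithin.mono hab))

theorem le_of_forall_zpow_mul_eq {p q : ℤ} (ha : ContinuousAt a 0) (hb : ContinuousAt b 0)
    (hb0 : b 0 ≠ 0) (hab : ∀ w ≠ 0, w ^ p * a w = w ^ q * b w) : p ≤ q := by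
  by_contra! hqp
  obtain ⟨k, hk⟩ : ∃ k : ℕ, p = q + (k + 1 : ℕ) := ⟨(p - q - 1).toNat, by omega⟩
  refine hb0 (eq_zero_of_forall_pow_mul_eq k.succ_ne_zero ha hb fun w hw => ?_)
  have := hab w hw
  rw [hk, zpow_add₀ hw, zpow_natCast, mul_assoc] at this
  exact mul_left_cancel₀ (zpow_ne_zero q hw) this

end OneVariable

theorem prod_mulSingle_zpow {ι M : Type*} [Fintype ι] [DecidableEq ι] [DivisionCommMonoid M]
    (i : ι) (w : M) (γ : ι → ℤ) : ∏ j, Pi.mulSingle i w j ^ γ j = w ^ γ i := by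
  rw [Fintype.prod_eq_single i fun j hj => by rw [Pi.mulSingle_eq_of_ne hj, one_zpow],
    Pi.mulSingle_eq_same]

/-- The exponent vector of a log smooth 𝕋 function is unique: if
z^α·g = z^β·h on (ℂ*)ⁿ with g,h continuous and nowhere vanishing on ℂⁿ, then α = β. -/
theorem exploded_stmt3 (n : ℕ) (α β : Fin n → ℤ)
    (g h : (Fin n → ℂ) → ℂ)
    (hg : Continuous g) (hg0 : ∀ z, g z ≠ 0)
    (hh : Continuous h) (hh0 : ∀ z, h z ≠ 0)
    (heq : ∀ z : Fin n → ℂ, (∀ i, z i ≠ 0) →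
      (∏ i, (z i) ^ (α i)) * g z = (∏ i, (z i) ^ (β i)) * h z) :
    α = β := by
  funext i
  have hline : ∀ w : ℂ, w ≠ 0 →
      w ^ α i * g (Pi.mulSingle i w) = w ^ β i * h (Pi.mulSingle i w) := fun w hw => by
    have hz : ∀ j, (Pi.mulSingle i w : Fin n → ℂ) j ≠ 0 := fun j => by
      rw [Pi.mulSingle_apply]; split_ifs <;> simp [hw]
    simpa only [prod_mulSingle_zpow] using heq _ hz
  have hg' := (hg.comp (continuous_mulSingle i)).continuousAt (x := 0)
  have hh' := (hh.comp (continuous_mulSingle i)).continuousAt (x := 0)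
  exact le_antisymm (le_of_forall_zpow_mul_eq hg' hh' (hh0 _) hline)
    (le_of_forall_zpow_mul_eq hh' hg' (hg0 _) fun w hw => (hline w hw).symm)
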